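/- Let A⁺, A⁻ : ℝ → ℝ be continuous. For i = 1, 2 let u_i⁺, u_i⁻, û_i ∈ ℝ satisfy the Rankine–Hugoniot condition A⁺(u_i⁺) = A⁻(u_i⁻) and the Kruzkov entropy inequality (with data (u_i⁻, u_i⁺, û_i)) at every c ∈ ℝ with c ∉ {u_i⁺, u_i⁻, û_i}. Then A⁺(u₁⁺)·[−2·χ(u₁⁺,u₂⁺) + 2·χ(u₁⁻,u₂⁻)] + A⁺(u₂⁺)·[−2·χ(u₂⁺,u₁⁺) + 2·χ(u₂⁻,u₁⁻)] ≤ 0. -/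

import Mathlib

open MeasureTheory Filter Set

/-- χ(v,u) = 1 if v < u, 1/2 if v = u, 0 if u < v. -/
noncomputable def chi (v u : ℝ) : ℝ := if v < u then 1 else if v = u then 1/2 else 0

/-- The Kruzkov entropy inequality at `c` for data `(um, up, uh)`:
`A⁺(u⁺)·sign(u⁺−c) − 2·sign(u⁺−û)·A⁺(c)·𝟙_{(û,u⁺)}(c) ≤
 A⁻(u⁻)·sign(u⁻−c) − 2·sign(u⁻−û)·A⁻(c)·𝟙_{(û,u⁻)}(c)`. -/
def KruzkovIneq (Ap Am : ℝ → ℝ) (um up uh c : ℝ) : Prop :=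
  Ap up * Real.sign (up - c) -
      2 * Real.sign (up - uh) * Ap c * Set.indicator (Set.uIoo uh up) (1 : ℝ → ℝ) c
    ≤ Am um * Real.sign (um - c) -
      2 * Real.sign (um - uh) * Am c * Set.indicator (Set.uIoo uh um) (1 : ℝ → ℝ) c

/-!
Write `sᵢ` for the common value `A⁺(uᵢ⁺) = A⁻(uᵢ⁻)`. Since `χ(v,u) + χ(u,v) = 1`, the left-hand
side equals `2 (χ(u₁⁻,u₂⁻) - χ(u₁⁺,u₂⁺)) (s₁ - s₂)`, which can only be positive when the two
jumps cross, say `u₁⁺ < u₂⁺` and `u₂⁻ < u₁⁻`; then we need `s₂ ≤ s₁`.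

Away from the three states, `sign(u - û) 𝟙_{(û,u)}(c) = (sign(u - c) - sign(û - c)) / 2`, so the
Kruzkov inequality at `c` strictly between the states is a one-sided bound of a flux by `s`:
`A⁺ ≥ s` on `[max(û,u⁻), u⁺]`, `A⁺ ≤ s` on `[u⁺, min(û,u⁻)]`, `A⁻ ≤ s` on `[max(û,u⁺), u⁻]` and
`A⁻ ≥ s` on `[u⁻, min(û,u⁺)]`, first off the three states and then, by continuity, on the closed
intervals. For crossing jumps some point carries a lower bound by `s₂` coming from the second
jump and an upper bound by `s₁` coming from the first one, for the same flux.
-/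

lemma chi_of_lt {v u : ℝ} (h : v < u) : chi v u = 1 := if_pos h

lemma chi_self (v : ℝ) : chi v v = 1 / 2 := by simp [chi]

lemma chi_of_gt {v u : ℝ} (h : u < v) : chi v u = 0 := by simp [chi, h.not_gt, h.ne']

lemma chi_swap (v u : ℝ) : chi v u = 1 - chi u v := by
  rcases lt_trichotomy v u with h | rfl | h
  · rw [chi_of_lt h, chi_of_gt h]; norm_num
  · rw [chi_self]; norm_num
  · rw [chi_of_gt h, chi_of_lt h]; norm_num

lemma le_on_Icc_of_le_on_Ioo_diff_finite {β : Type*} [TopologicalSpace β] [Preorder β]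
    [OrderClosedTopology β] {f g : ℝ → β} (hf : Continuous f) (hg : Continuous g) {a b : ℝ}
    (hab : a < b) {F : Set ℝ} (hF : F.Finite) (h : ∀ c ∈ Ioo a b, c ∉ F → f c ≤ g c) {t : ℝ}
    (ht : t ∈ Icc a b) : f t ≤ g t := by
  have hsub : Icc a b ⊆ closure (Ioo a b ∩ Fᶜ) := by
    rw [← closure_Ioo hab.ne]
    exact closure_minimal ((hF.countable.dense_compl ℝ).open_subset_closure_inter isOpen_Ioo)
      isClosed_closure
  exact le_on_closure (fun c hc => h c hc.1 hc.2) hf.continuousOn hg.continuousOn (hsub ht)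

lemma sign_sub_mul_indicator_uIoo {a b c : ℝ} (ha : c ≠ a) (hb : c ≠ b) :
    Real.sign (b - a) * (uIoo a b).indicator 1 c = (Real.sign (b - c) - Real.sign (a - c)) / 2 := by
  rcases ha.lt_or_gt with ha | ha <;> rcases hb.lt_or_gt with hb | hb
  · rw [indicator_of_notMem (show c ∉ uIoo a b from fun h => (lt_min ha hb).not_ge h.1.le),
      Real.sign_of_pos (sub_pos.2 ha), Real.sign_of_pos (sub_pos.2 hb)]
    norm_num
  · rw [indicator_of_mem (mem_uIoo_of_gt hb ha), Real.sign_of_neg (sub_neg.2 (hb.trans ha)),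
      Real.sign_of_neg (sub_neg.2 hb), Real.sign_of_pos (sub_pos.2 ha)]
    norm_num
  · rw [indicator_of_mem (mem_uIoo_of_lt ha hb), Real.sign_of_pos (sub_pos.2 (ha.trans hb)),
      Real.sign_of_pos (sub_pos.2 hb), Real.sign_of_neg (sub_neg.2 ha)]
    norm_num
  · rw [indicator_of_notMem (show c ∉ uIoo a b from fun h => (max_lt ha hb).not_ge h.2.le),
      Real.sign_of_neg (sub_neg.2 ha), Real.sign_of_neg (sub_neg.2 hb)]
    norm_num

lemma kruzkovIneq_iff {Ap Am : ℝ → ℝ} {um up uh c : ℝ} (hup : c ≠ up) (hum : c ≠ um)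
    (huh : c ≠ uh) :
    KruzkovIneq Ap Am um up uh c ↔
      Ap up * Real.sign (up - c) - (Real.sign (up - c) - Real.sign (uh - c)) * Ap c ≤
        Am um * Real.sign (um - c) - (Real.sign (um - c) - Real.sign (uh - c)) * Am c := by
  have indicator_term : ∀ (f : ℝ → ℝ) (u : ℝ), c ≠ u →
      2 * Real.sign (u - uh) * f c * (uIoo uh u).indicator 1 c =
        (Real.sign (u - c) - Real.sign (uh - c)) * f c := fun f u hu => by
    rw [mul_right_comm, mul_assoc 2, sign_sub_mul_indicator_uIoo huh hu]
    ring
  rw [KruzkovIneq, indicator_term Ap up hup, indicator_term Am um hum]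

structure EntropyJump (Ap Am : ℝ → ℝ) (um up uh : ℝ) : Prop where
  rankineHugoniot : Ap up = Am um
  kruzkov : ∀ c, c ≠ up → c ≠ um → c ≠ uh → KruzkovIneq Ap Am um up uh c

namespace EntropyJump

variable {Ap Am : ℝ → ℝ} {um up uh t : ℝ}

lemma kruzkov_sign (h : EntropyJump Ap Am um up uh) {c : ℝ} (hc : c ∉ ({up, um, uh} : Set ℝ)) :
    Ap up * Real.sign (up - c) - (Real.sign (up - c) - Real.sign (uh - c)) * Ap c ≤
      Ap up * Real.sign (um - c) - (Real.sign (um - c) - Real.sign (uh - c)) * Am c := by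
  simp only [mem_insert_iff, mem_singleton_iff, not_or] at hc
  have hk := h.kruzkov c hc.1 hc.2.1 hc.2.2
  rwa [kruzkovIneq_iff hc.1 hc.2.1 hc.2.2, ← h.rankineHugoniot] at hk

lemma ap_up_le_ap (h : EntropyJump Ap Am um up uh) (hAp : Continuous Ap)
    (ht : t ∈ Icc (max uh um) up) : Ap up ≤ Ap t := by
  obtain rfl | hlt := ht.2.eq_or_lt
  · exact le_rfl
  refine le_on_Icc_of_le_on_Ioo_diff_finite continuous_const hAp (ht.1.trans_lt hlt)
    (toFinite {up, um, uh}) (fun c hc hcF => ?_) ht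
  have hk := h.kruzkov_sign hcF
  rw [Real.sign_of_pos (sub_pos.2 hc.2), Real.sign_of_neg (sub_neg.2 (max_lt_iff.1 hc.1).2),
    Real.sign_of_neg (sub_neg.2 (max_lt_iff.1 hc.1).1)] at hk
  linarith

lemma ap_le_ap_up (h : EntropyJump Ap Am um up uh) (hAp : Continuous Ap)
    (ht : t ∈ Icc up (min uh um)) : Ap t ≤ Ap up := by
  obtain rfl | hlt := ht.1.eq_or_lt
  · exact le_rfl
  refine le_on_Icc_of_le_on_Ioo_diff_finite hAp continuous_const (hlt.trans_le ht.2)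
    (toFinite {up, um, uh}) (fun c hc hcF => ?_) ht
  have hk := h.kruzkov_sign hcF
  rw [Real.sign_of_neg (sub_neg.2 hc.1), Real.sign_of_pos (sub_pos.2 (lt_min_iff.1 hc.2).2),
    Real.sign_of_pos (sub_pos.2 (lt_min_iff.1 hc.2).1)] at hk
  linarith

lemma am_le_am_um (h : EntropyJump Ap Am um up uh) (hAm : Continuous Am)
    (ht : t ∈ Icc (max uh up) um) : Am t ≤ Am um := by
  obtain rfl | hlt := ht.2.eq_or_lt
  · exact le_rfl
  refine le_on_Icc_of_le_on_Ioo_diff_finite hAm continuous_const (ht.1.trans_lt hlt)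
    (toFinite {up, um, uh}) (fun c hc hcF => ?_) ht
  have hk := h.kruzkov_sign hcF
  rw [Real.sign_of_neg (sub_neg.2 (max_lt_iff.1 hc.1).2), Real.sign_of_pos (sub_pos.2 hc.2),
    Real.sign_of_neg (sub_neg.2 (max_lt_iff.1 hc.1).1), h.rankineHugoniot] at hk
  linarith

lemma am_um_le_am (h : EntropyJump Ap Am um up uh) (hAm : Continuous Am)
    (ht : t ∈ Icc um (min uh up)) : Am um ≤ Am t := by
  obtain rfl | hlt := ht.1.eq_or_lt
  · exact le_rfl
  refine le_on_Icc_of_le_on_Ioo_diff_finite continuous_const hAm (hlt.trans_le ht.2)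
    (toFinite {up, um, uh}) (fun c hc hcF => ?_) ht
  have hk := h.kruzkov_sign hcF
  rw [Real.sign_of_pos (sub_pos.2 (lt_min_iff.1 hc.2).2), Real.sign_of_neg (sub_neg.2 hc.1),
    Real.sign_of_pos (sub_pos.2 (lt_min_iff.1 hc.2).1), h.rankineHugoniot] at hk
  linarith

end EntropyJump

/-- The places where a lower bound from a jump `(um2, up2, uh2)` meets an upper bound from a jump
`(um1, up1, uh1)` crossing it: an interior point for `A⁺` or for `A⁻`, or an endpoint of one jump
lying in a bound interval of the other. -/
lemma crossing_cases {up1 up2 um1 um2 uh1 uh2 : ℝ} (hp : up1 < up2) (hm : um2 < um1) :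
    (∃ t, t ∈ Icc (max uh2 um2) up2 ∧ t ∈ Icc up1 (min uh1 um1)) ∨
    (∃ t, t ∈ Icc um2 (min uh2 up2) ∧ t ∈ Icc (max uh1 up1) um1) ∨
    (um1 ≤ uh2 ∧ um1 ≤ up2) ∨ (uh2 ≤ up1 ∧ um2 ≤ up1) ∨
    (up2 ≤ uh1 ∧ up2 ≤ um1) ∨ (uh1 ≤ um2 ∧ up1 ≤ um2) := by
  by_contra! h
  obtain ⟨hplus, hminus, ha, hb, hc, hd⟩ := h
  -- Otherwise the largest left endpoint of the two `A⁺` intervals (if `uh2 ≤ uh1`), resp. of the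
  -- two `A⁻` intervals, lies in both.
  rcases le_total uh2 uh1 with h | h
  · refine hplus (max (max uh2 um2) up1) ?_ ?_ <;>
      simp only [mem_Icc, max_le_iff, le_min_iff] <;> grind
  · refine hminus (max (max uh1 up1) um2) ?_ ?_ <;>
      simp only [mem_Icc, max_le_iff, le_min_iff] <;> grind

namespace EntropyJump

variable {Ap Am : ℝ → ℝ} {um1 up1 uh1 um2 up2 uh2 : ℝ}

lemma ap_le_ap_of_crossing (h1 : EntropyJump Ap Am um1 up1 uh1)
    (h2 : EntropyJump Ap Am um2 up2 uh2) (hAp : Continuous Ap) (hAm : Continuous Am)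
    (hp : up1 < up2) (hm : um2 < um1) : Ap up2 ≤ Ap up1 := by
  rcases crossing_cases (uh1 := uh1) (uh2 := uh2) hp hm with
    ⟨t, ht2, ht1⟩ | ⟨t, ht2, ht1⟩ | ⟨h, h'⟩ | ⟨h, h'⟩ | ⟨h, h'⟩ | ⟨h, h'⟩
  · exact (h2.ap_up_le_ap hAp ht2).trans (h1.ap_le_ap_up hAp ht1)
  · rw [h1.rankineHugoniot, h2.rankineHugoniot]
    exact (h2.am_um_le_am hAm ht2).trans (h1.am_le_am_um hAm ht1)
  · rw [h1.rankineHugoniot, h2.rankineHugoniot]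
    exact h2.am_um_le_am hAm ⟨hm.le, le_min h h'⟩
  · exact h2.ap_up_le_ap hAp ⟨max_le h h', hp.le⟩
  · exact h1.ap_le_ap_up hAp ⟨hp.le, le_min h h'⟩
  · rw [h1.rankineHugoniot, h2.rankineHugoniot]
    exact h1.am_le_am_um hAm ⟨max_le h h', hm.le⟩

lemma chi_sub_chi_mul_sub_nonpos (h1 : EntropyJump Ap Am um1 up1 uh1)
    (h2 : EntropyJump Ap Am um2 up2 uh2) (hAp : Continuous Ap) (hAm : Continuous Am) :
    (chi um1 um2 - chi up1 up2) * (Ap up1 - Ap up2) ≤ 0 := by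
  wlog hp : up1 ≤ up2 generalizing um1 up1 uh1 um2 up2 uh2
  · calc (chi um1 um2 - chi up1 up2) * (Ap up1 - Ap up2)
        = (chi um2 um1 - chi up2 up1) * (Ap up2 - Ap up1) := by
          rw [chi_swap um2, chi_swap up2]; ring
      _ ≤ 0 := this h2 h1 (le_of_not_ge hp)
  obtain hp | rfl := hp.lt_or_eq
  · rw [chi_of_lt hp]
    rcases lt_trichotomy um1 um2 with hm | rfl | hm
    · rw [chi_of_lt hm]; simp
    · rw [h1.rankineHugoniot, h2.rankineHugoniot]; simp
    · rw [chi_of_gt hm]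
      linarith [h1.ap_le_ap_of_crossing h2 hAp hAm hp hm]
  · simp

end EntropyJump

theorem stmt_15 (Ap Am : ℝ → ℝ) (hAp : Continuous Ap) (hAm : Continuous Am)
    (up1 um1 uh1 up2 um2 uh2 : ℝ)
    (hRH1 : Ap up1 = Am um1) (hRH2 : Ap up2 = Am um2)
    (hkruz1 : ∀ c : ℝ, c ≠ up1 → c ≠ um1 → c ≠ uh1 → KruzkovIneq Ap Am um1 up1 uh1 c)
    (hkruz2 : ∀ c : ℝ, c ≠ up2 → c ≠ um2 → c ≠ uh2 → KruzkovIneq Ap Am um2 up2 uh2 c) :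
    Ap up1 * (-2 * chi up1 up2 + 2 * chi um1 um2) +
      Ap up2 * (-2 * chi up2 up1 + 2 * chi um2 um1) ≤ 0 := by
  have key := EntropyJump.chi_sub_chi_mul_sub_nonpos ⟨hRH1, hkruz1⟩ ⟨hRH2, hkruz2⟩ hAp hAm
  calc Ap up1 * (-2 * chi up1 up2 + 2 * chi um1 um2) +
        Ap up2 * (-2 * chi up2 up1 + 2 * chi um2 um1)
      = 2 * ((chi um1 um2 - chi up1 up2) * (Ap up1 - Ap up2)) := by
        rw [chi_swap up2, chi_swap um2]; ring
    _ ≤ 0 := by linarith
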